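/- arXiv:2106.02470 — 7 statements merged into one kernel-verified Lean document; each statement's English description precedes it below -/
import Mathlib

section
/- Let q be an odd prime, r an odd prime with gcd(r, 2q) = 1 and r mod 2q ∈ D_0^{(2q)}, and let ℓ_k = ord_{2q}(r) be the multiplicative order of r modulo 2q. For a positive integer t < 2q, the size of the r-cyclotomic coset C_{(t,2q)} = {t·r^i mod 2q : i ∈ ℕ} equals 1 if gcd(2q, t) = q (i.e., t = q), and equals ℓ_k otherwise (i.e., when gcd(2q, t) ∈ {1, 2}). -/
open Polynomial

/-- The cyclotomic class `D_i^{(2q)} = {g^(2s+i) mod 2q : 0 ≤ s < (q-1)/2}`. -/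
def Dcl (q g i : ℕ) : Finset ℕ :=
  (Finset.range ((q - 1) / 2)).image fun s => g ^ (2 * s + i) % (2 * q)

/-- The cyclotomic class `E_i^{(2q)} = {2u mod 2q : u ∈ D_i^{(2q)}}`. -/
def Ecl (q g i : ℕ) : Finset ℕ :=
  (Dcl q g i).image fun u => 2 * u % (2 * q)

/-- The `r`-cyclotomic coset modulo `2q` containing `t`: `{t·r^i mod 2q : i ∈ ℕ}`. -/
def Ccoset (q r t : ℕ) : Set ℕ := {x | ∃ i : ℕ, x = t * r ^ i % (2 * q)}

/-- `g_{D_i}^{(2q)}(x) = ∏_{j ∈ D_i^{(2q)}} (x - η^j)`. -/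
noncomputable def gDpoly (F : Type) [Field F] (q g i : ℕ) (η : F) : F[X] :=
  ∏ j ∈ Dcl q g i, (X - C (η ^ j))

/-- `g_{E_i}^{(2q)}(x) = ∏_{j ∈ E_i^{(2q)}} (x - η^j)`. -/
noncomputable def gEpoly (F : Type) [Field F] (q g i : ℕ) (η : F) : F[X] :=
  ∏ j ∈ Ecl q g i, (X - C (η ^ j))

/-- `M_t(x) = ∏_{j ∈ C_{(t,2q)}} (x - η^j)`, the minimal polynomial of `η^t`. -/
noncomputable def Mpoly (F : Type) [Field F] (q r t : ℕ) (η : F) : F[X] :=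
  ∏ᶠ j ∈ Ccoset q r t, (X - C (η ^ j))

/-- The reciprocal polynomial `h̃(x) = h(0)⁻¹ x^{deg h} h(x⁻¹)`. -/
noncomputable def recip (F : Type) [Field F] (h : F[X]) : F[X] :=
  C (h.coeff 0)⁻¹ * h.reverse

theorem stmt5 (q g : ℕ) (hq : q.Prime) (hodd : Odd q)
    (hgq : orderOf ((g : ℕ) : ZMod q) = q - 1)
    (hg2q : orderOf ((g : ℕ) : ZMod (2 * q)) = q - 1)
    (r : ℕ) (hr : r.Prime) (hrodd : Odd r)
    (hrD : r % (2 * q) ∈ Dcl q g 0)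
    (hcop : Nat.gcd r (2 * q) = 1)
    (t : ℕ) (ht0 : 0 < t) (ht2q : t < 2 * q) :
    (Ccoset q r t).ncard =
      if Nat.gcd (2 * q) t = q then 1 else orderOf ((r : ℕ) : ZMod (2 * q)) := by
  have hq2 : 2 ≤ q := hq.two_le
  haveI : NeZero (2 * q) := ⟨by omega⟩
  set ℓ := orderOf ((r : ℕ) : ZMod (2 * q)) with hℓdef
  have hru : IsUnit ((r : ℕ) : ZMod (2 * q)) := by
    rw [ZMod.isUnit_iff_coprime]; exact hcop
  set u : (ZMod (2 * q))ˣ := hru.unit with hudef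
  have huval : (u : ZMod (2 * q)) = ((r : ℕ) : ZMod (2 * q)) := hru.unit_spec
  have hℓu : orderOf u = ℓ := by rw [hℓdef, ← huval, orderOf_units]
  have hℓpos : 0 < ℓ := by rw [← hℓu]; exact orderOf_pos u
  by_cases hgcd : Nat.gcd (2 * q) t = q
  · have hqt : q ∣ t := hgcd ▸ Nat.gcd_dvd_right (2 * q) t
    have htq : t = q := by
      obtain ⟨c, rfl⟩ := hqt
      have hc2 : c < 2 := by
        refine Nat.lt_of_mul_lt_mul_left (a := q) ?_
        calc q * c < 2 * q := ht2q
        _ = q * 2 := by ring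
      have hc1 : 1 ≤ c := by
        rcases Nat.eq_zero_or_pos c with h | h
        · subst h; simp at ht0
        · exact h
      have : c = 1 := by omega
      rw [this, mul_one]
    have hset : Ccoset q r t = {q} := by
      ext x
      simp only [Ccoset, Set.mem_setOf_eq, Set.mem_singleton_iff]
      constructor
      · rintro ⟨i, rfl⟩
        obtain ⟨k, hk⟩ := hrodd.pow (n := i)
        rw [htq, hk]
        have h1 : q * (2 * k + 1) = q + k * (2 * q) := by ring
        rw [h1, Nat.add_mul_mod_self_right, Nat.mod_eq_of_lt (by omega)]
      · rintro rfl
        exact ⟨0, by rw [htq, pow_zero, mul_one, Nat.mod_eq_of_lt (by omega)]⟩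
    rw [hset, if_pos hgcd, Set.ncard_singleton]
  · rw [if_neg hgcd]
    have htq : Nat.Coprime q t := by
      rcases Nat.coprime_or_dvd_of_prime hq t with h | h
      · exact h
      · exfalso; apply hgcd
        have htq' : t = q := by
          obtain ⟨c, rfl⟩ := h
          have hc2 : c < 2 := by
            refine Nat.lt_of_mul_lt_mul_left (a := q) ?_
            calc q * c < 2 * q := ht2q
            _ = q * 2 := by ring
          have hc1 : 1 ≤ c := by
            rcases Nat.eq_zero_or_pos c with h0 | h0
            · subst h0; simp at ht0
            · exact h0
          have : c = 1 := by omega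
          rw [this, mul_one]
        rw [htq']
        exact Nat.gcd_eq_right ⟨2, by ring⟩
    have hcop2 : Nat.Coprime 2 q := Nat.coprime_two_left.mpr hodd
    have key : ∀ i j : ℕ, (t * r ^ i ≡ t * r ^ j [MOD 2 * q]) ↔ i ≡ j [MOD ℓ] := by
      intro i j
      constructor
      · intro h
        have hr' : r ^ i ≡ r ^ j [MOD q] := by
          have hq'' : t * r ^ i ≡ t * r ^ j [MOD q] := h.of_dvd ⟨2, by ring⟩
          exact Nat.ModEq.cancel_left_of_coprime htq hq''
        have h2 : r ^ i ≡ r ^ j [MOD 2] := by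
          have hi : r ^ i % 2 = 1 := Nat.odd_iff.mp (hrodd.pow)
          have hj : r ^ j % 2 = 1 := Nat.odd_iff.mp (hrodd.pow)
          show r ^ i % 2 = r ^ j % 2
          rw [hi, hj]
        have h2q' : r ^ i ≡ r ^ j [MOD 2 * q] :=
          (Nat.modEq_and_modEq_iff_modEq_mul hcop2).mp ⟨h2, hr'⟩
        have hz : ((r : ℕ) : ZMod (2 * q)) ^ i = ((r : ℕ) : ZMod (2 * q)) ^ j := by
          have := (ZMod.natCast_eq_natCast_iff _ _ _).mpr h2q'
          push_cast at this
          exact this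
        have hu : u ^ i = u ^ j := by
          apply Units.ext
          rw [Units.val_pow_eq_pow_val, Units.val_pow_eq_pow_val, huval]
          exact hz
        rw [← hℓu]
        exact pow_eq_pow_iff_modEq.mp hu
      · intro h
        have hu : u ^ i = u ^ j := pow_eq_pow_iff_modEq.mpr (hℓu ▸ h)
        have hz : ((r : ℕ) : ZMod (2 * q)) ^ i = ((r : ℕ) : ZMod (2 * q)) ^ j := by
          have := congrArg Units.val hu
          rwa [Units.val_pow_eq_pow_val, Units.val_pow_eq_pow_val, huval] at this
        have hc : ((t * r ^ i : ℕ) : ZMod (2 * q)) = ((t * r ^ j : ℕ) : ZMod (2 * q)) := by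
          push_cast
          rw [hz]
        exact (ZMod.natCast_eq_natCast_iff _ _ _).mp hc
    have hset : Ccoset q r t =
        ↑((Finset.range ℓ).image fun i => t * r ^ i % (2 * q)) := by
      ext x
      simp only [Ccoset, Set.mem_setOf_eq, Finset.coe_image, Finset.coe_range,
        Set.mem_image, Set.mem_Iio]
      constructor
      · rintro ⟨i, rfl⟩
        refine ⟨i % ℓ, Nat.mod_lt i hℓpos, ?_⟩
        exact (key (i % ℓ) i).mpr (Nat.mod_modEq i ℓ)
      · rintro ⟨i, _, rfl⟩
        exact ⟨i, rfl⟩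
    rw [hset, Set.ncard_coe_finset, Finset.card_image_of_injOn, Finset.card_range]
    intro i hi j hj hij
    simp only [Finset.mem_coe, Finset.mem_range] at hi hj
    have hm := (key i j).mp hij
    rwa [Nat.ModEq, Nat.mod_eq_of_lt hi, Nat.mod_eq_of_lt hj] at hm
end

section
/- Let q be an odd prime, r an odd prime with r mod 2q ∈ D_0^{(2q)}, n = ord_{2q}(r), and η a primitive 2q-th root of unity in 𝔽_{r^n}. Then for each i ∈ {0,1} the polynomials g_{D_i}^{(2q)}(x) = ∏_{j ∈ D_i^{(2q)}}(x − η^j) and g_{E_i}^{(2q)}(x) = ∏_{j ∈ E_i^{(2q)}}(x − η^j) have all their coefficients in the prime subfield 𝔽_r of 𝔽_{r^n}. -/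
open Polynomial

lemma fixed_mem_bot {F : Type} [Field F] (r : ℕ) [hF : Fact r.Prime] [CharP F r]
    (x : F) (hx : x ^ r = x) : x ∈ (⊥ : Subfield F) := by
  classical
  haveI : NeZero r := ⟨hF.out.ne_zero⟩
  have hr1 : 1 < r := hF.out.one_lt
  set ψ : ZMod r →+* F := ZMod.castHom (dvd_refl r) F with hψdef
  have hψ : Function.Injective ψ := (ZMod.castHom (dvd_refl r) F).injective
  set p : F[X] := X ^ r - X with hp
  have hpne : p ≠ 0 := FiniteField.X_pow_card_sub_X_ne_zero F hr1
  have hroot : ∀ y : F, y ^ r = y → y ∈ p.roots.toFinset := by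
    intro y hy
    rw [Multiset.mem_toFinset, mem_roots hpne]
    simp [hp, IsRoot, hy]
  have hx' : x ∈ Finset.univ.image ψ := by
    by_contra hc
    have hsub : insert x (Finset.univ.image ψ) ⊆ p.roots.toFinset := by
      intro y hy
      rcases Finset.mem_insert.mp hy with h | h
      · exact h ▸ hroot x hx
      · obtain ⟨a, _, rfl⟩ := Finset.mem_image.mp h
        exact hroot _ (by rw [← map_pow, ZMod.pow_card])
    have hcard : r + 1 ≤ p.roots.toFinset.card := by
      have h1 : (insert x (Finset.univ.image ψ)).card = r + 1 := by
        rw [Finset.card_insert_of_notMem hc, Finset.card_image_of_injective _ hψ,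
          Finset.card_univ, ZMod.card]
      calc r + 1 = (insert x (Finset.univ.image ψ)).card := h1.symm
        _ ≤ p.roots.toFinset.card := Finset.card_le_card hsub
    have h2 : p.roots.toFinset.card ≤ Multiset.card p.roots := Multiset.toFinset_card_le _
    have h3 : Multiset.card p.roots ≤ p.natDegree := p.card_roots'
    have h4 : p.natDegree = r := FiniteField.X_pow_card_sub_X_natDegree_eq F hr1
    omega
  obtain ⟨a, _, rfl⟩ := Finset.mem_image.mp hx'
  have : ψ a = ((a.val : ℕ) : F) := by
    conv_lhs => rw [← ZMod.natCast_rightInverse a]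
    exact map_natCast ψ a.val
  rw [this]
  exact natCast_mem _ _

lemma pow_mod_eq {F : Type} [Field F] {N : ℕ} (η : F) (hη : η ^ N = 1) (a : ℕ) :
    η ^ (a % N) = η ^ a := by
  conv_rhs => rw [← Nat.div_add_mod a N, pow_add, pow_mul, hη, one_pow, one_mul]

lemma prod_coeff_mem_bot {F : Type} [Field F] (r : ℕ) [hF : Fact r.Prime] [CharP F r]
    (N : ℕ) (hru : IsUnit ((r : ℕ) : ZMod N))
    (η : F) (hηN : η ^ N = 1) (S : Finset ℕ)
    (hlt : ∀ j ∈ S, j < N) (hcl : ∀ j ∈ S, j * r % N ∈ S) :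
    ∀ k, (∏ j ∈ S, (X - C (η ^ j))).coeff k ∈ (⊥ : Subfield F) := by
  classical
  set m : ℕ → ℕ := fun j => j * r % N with hm
  have hinj : Set.InjOn m S := by
    intro j hj j' hj' hjj
    have hc : ((j : ZMod N)) * r = ((j' : ZMod N)) * r := by
      have := congrArg (fun t : ℕ => ((t : ℕ) : ZMod N)) hjj
      simpa [hm, ZMod.natCast_mod, Nat.cast_mul] using this
    have heq : (j : ZMod N) = (j' : ZMod N) := hru.mul_right_cancel hc
    have hmod : j % N = j' % N := (ZMod.natCast_eq_natCast_iff _ _ _).mp heq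
    rwa [Nat.mod_eq_of_lt (hlt j hj), Nat.mod_eq_of_lt (hlt j' hj')] at hmod
  have himg : S.image m = S := by
    apply Finset.eq_of_subset_of_card_le
    · intro y hy
      obtain ⟨j, hj, rfl⟩ := Finset.mem_image.mp hy
      exact hcl j hj
    · rw [Finset.card_image_of_injOn hinj]
  set P : F[X] := ∏ j ∈ S, (X - C (η ^ j)) with hP
  have hfrob : P.map (frobenius F r) = P := by
    rw [hP, Polynomial.map_prod]
    have : ∀ j ∈ S, (X - C (η ^ j)).map (frobenius F r) = X - C (η ^ (m j)) := by
      intro j hj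
      rw [Polynomial.map_sub, Polynomial.map_X, Polynomial.map_C, frobenius_def,
        ← pow_mul, hm, pow_mod_eq η hηN]
    rw [Finset.prod_congr rfl this]
    conv_rhs => rw [← himg]
    rw [Finset.prod_image (fun a ha b hb => hinj ha hb)]
  intro k
  apply fixed_mem_bot r
  have := congrArg (fun p : F[X] => p.coeff k) hfrob
  simpa [Polynomial.coeff_map, frobenius_def] using this

theorem stmt6 (q g : ℕ) (hq : q.Prime) (hodd : Odd q)
    (hgq : orderOf ((g : ℕ) : ZMod q) = q - 1)
    (hg2q : orderOf ((g : ℕ) : ZMod (2 * q)) = q - 1)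
    (r : ℕ) (hr : r.Prime) (hrodd : Odd r)
    (hrD : r % (2 * q) ∈ Dcl q g 0)
    (F : Type) [Field F] [Fintype F] [CharP F r]
    (hcard : Fintype.card F = r ^ orderOf ((r : ℕ) : ZMod (2 * q)))
    (η : F) (hη : IsPrimitiveRoot η (2 * q))
    (i : ℕ) (hi : i ∈ ({0, 1} : Set ℕ)) :
    (∀ k, (gDpoly F q g i η).coeff k ∈ (⊥ : Subfield F)) ∧
    (∀ k, (gEpoly F q g i η).coeff k ∈ (⊥ : Subfield F)) := by
  classical
  haveI : Fact r.Prime := ⟨hr⟩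
  obtain ⟨c, hc⟩ := hodd
  have hc0 : 0 < c := by have := hq.two_le; omega
  have hq1 : q - 1 = 2 * c := by omega
  have hm2 : (q - 1) / 2 = c := by omega
  have hN : 0 < 2 * q := by have := hq.two_le; omega
  have hγ1 : ((g : ℕ) : ZMod (2 * q)) ^ (q - 1) = 1 := by
    rw [← hg2q]; exact pow_orderOf_eq_one _
  have hγu : IsUnit ((g : ℕ) : ZMod (2 * q)) := by
    apply IsOfFinOrder.isUnit
    rw [← orderOf_pos_iff, hg2q]
    omega
  obtain ⟨s', hs', hgs'⟩ := Finset.mem_image.mp hrD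
  have hrc : ((r : ℕ) : ZMod (2 * q)) = ((g : ℕ) : ZMod (2 * q)) ^ (2 * s') := by
    have h := congrArg (fun t : ℕ => ((t : ℕ) : ZMod (2 * q))) hgs'
    simpa [ZMod.natCast_mod, Nat.cast_pow] using h.symm
  have hru : IsUnit ((r : ℕ) : ZMod (2 * q)) := by rw [hrc]; exact hγu.pow _
  have hηN : η ^ (2 * q) = 1 := hη.pow_eq_one
  have hDcl : ∀ j ∈ Dcl q g i, j * r % (2 * q) ∈ Dcl q g i := by
    intro j hj
    simp only [Dcl, Finset.mem_image, Finset.mem_range, hm2] at hj ⊢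
    obtain ⟨s, hs, rfl⟩ := hj
    refine ⟨(s + s') % c, Nat.mod_lt _ hc0, ?_⟩
    have hdm : c * ((s + s') / c) + (s + s') % c = s + s' := Nat.div_add_mod (s + s') c
    have hcast : ((g ^ (2 * ((s + s') % c) + i) : ℕ) : ZMod (2 * q))
        = ((g ^ (2 * s + i) % (2 * q) * r : ℕ) : ZMod (2 * q)) := by
      rw [Nat.cast_mul, ZMod.natCast_mod, Nat.cast_pow, Nat.cast_pow, hrc, ← pow_add]
      have he : 2 * s + i + 2 * s'
          = (q - 1) * ((s + s') / c) + (2 * ((s + s') % c) + i) := by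
        rw [hq1]
        calc 2 * s + i + 2 * s'
            = 2 * (c * ((s + s') / c) + (s + s') % c) + i := by rw [hdm]; ring
          _ = 2 * c * ((s + s') / c) + (2 * ((s + s') % c) + i) := by ring
      conv_rhs => rw [he, pow_add, pow_mul, hγ1, one_pow, one_mul]
    exact (ZMod.natCast_eq_natCast_iff _ _ _).mp hcast
  have hEcl : ∀ j ∈ Ecl q g i, j * r % (2 * q) ∈ Ecl q g i := by
    intro j hj
    simp only [Ecl, Finset.mem_image] at hj ⊢
    obtain ⟨u, hu, rfl⟩ := hj
    refine ⟨u * r % (2 * q), hDcl u hu, ?_⟩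
    have h1 : 2 * u % (2 * q) * r ≡ 2 * u * r [MOD 2 * q] :=
      (Nat.mod_modEq (2 * u) (2 * q)).mul_right r
    have h2 : 2 * (u * r % (2 * q)) ≡ 2 * (u * r) [MOD 2 * q] :=
      (Nat.mod_modEq (u * r) (2 * q)).mul_left 2
    calc 2 * (u * r % (2 * q)) % (2 * q) = 2 * (u * r) % (2 * q) := h2
      _ = 2 * u * r % (2 * q) := by rw [mul_assoc]
      _ = 2 * u % (2 * q) * r % (2 * q) := h1.symm
  have hltD : ∀ j ∈ Dcl q g i, j < 2 * q := by
    intro j hj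
    simp only [Dcl, Finset.mem_image] at hj
    obtain ⟨s, _, rfl⟩ := hj
    exact Nat.mod_lt _ hN
  have hltE : ∀ j ∈ Ecl q g i, j < 2 * q := by
    intro j hj
    simp only [Ecl, Finset.mem_image] at hj
    obtain ⟨u, _, rfl⟩ := hj
    exact Nat.mod_lt _ hN
  constructor
  · intro k
    have := prod_coeff_mem_bot r (2 * q) hru η hηN (Dcl q g i) hltD hDcl k
    simpa [gDpoly] using this
  · intro k
    have := prod_coeff_mem_bot r (2 * q) hru η hηN (Ecl q g i) hltE hEcl k
    simpa [gEpoly] using this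
end

section
/- Let q be an odd prime with q ≡ 3 (mod 4), r an odd prime with r mod 2q ∈ D_0^{(2q)}, n = ord_{2q}(r), and η a primitive 2q-th root of unity in 𝔽_{r^n}. Then for each i ∈ {0,1} the reciprocal polynomial of g_{D_i}^{(2q)} satisfies g̃_{D_i}^{(2q)}(x) = g_{D_{(i+1) mod 2}}^{(2q)}(x), where for a polynomial h of degree k with h(0) ≠ 0 its reciprocal is h̃(x) = h(0)^{−1} x^k h(x^{−1}). -/
open Polynomial

/-!
Since `(ℤ/2q)ˣ` is cyclic and `g` has even order `q - 1` there, `g^((q-1)/2)` is its unique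
element of order two, namely `-1`. As `q ≡ 3 (mod 4)`, `(q-1)/2` is odd, so `j ↦ -j` maps
`D_i` bijectively onto `D_{1-i}`. The reciprocal of `∏ (X - a)` is `∏ (X - a⁻¹)`, and
`(η^j)⁻¹ = η^(-j)`, so the reciprocal of `g_{D_i}` is `g_{D_{1-i}}`.
-/

section Reciprocal

variable {F : Type} [Field F]

lemma recip_one : recip F 1 = 1 := by
  simp [recip, reverse]

lemma recip_mul (p q : F[X]) : recip F (p * q) = recip F p * recip F q := by
  rw [recip, recip, recip, reverse_mul_of_domain, mul_coeff_zero, mul_inv, C_mul]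
  ring

noncomputable def recipHom : F[X] →* F[X] where
  toFun := recip F
  map_one' := recip_one
  map_mul' := recip_mul

lemma recip_X_sub_C {a : F} (ha : a ≠ 0) : recip F (X - C a) = X - C a⁻¹ := by
  have hrev : (X - C a).reverse = 1 - C a * X := by
    rw [reverse, natDegree_X_sub_C, reflect_sub, reflect_C, ← pow_one (X : F[X]),
      reflect_monomial]
    simp [revAt_le]
  rw [recip, hrev, coeff_sub, coeff_X_zero, coeff_C_zero, zero_sub, inv_neg, map_neg, neg_mul,
    mul_sub, mul_one, ← mul_assoc, ← C_mul, inv_mul_cancel₀ ha, C_1, one_mul, neg_sub]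

lemma recip_prod_X_sub_C {ι : Type*} (s : Finset ι) (f : ι → F) (hf : ∀ j ∈ s, f j ≠ 0) :
    recip F (∏ j ∈ s, (X - C (f j))) = ∏ j ∈ s, (X - C (f j)⁻¹) :=
  (map_prod recipHom _ s).trans (Finset.prod_congr rfl fun j hj => recip_X_sub_C (hf j hj))

end Reciprocal

lemma IsCyclic.eq_of_orderOf_eq_two {α : Type*} [Group α] [Finite α] [IsCyclic α] {a b : α}
    (ha : orderOf a = 2) (hb : orderOf b = 2) : a = b := by
  classical
  have := Fintype.ofFinite α
  have hcard := IsCyclic.card_orderOf_eq_totient (α := α) (ha ▸ orderOf_dvd_card)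
  rw [Nat.totient_two, Finset.card_eq_one] at hcard
  obtain ⟨c, hc⟩ := hcard
  have hmem : ∀ x : α, orderOf x = 2 → x = c := fun x hx =>
    Finset.mem_singleton.mp (hc ▸ Finset.mem_filter.mpr ⟨Finset.mem_univ x, hx⟩)
  rw [hmem a ha, hmem b hb]

lemma pow_orderOf_div_two_eq_neg_one {R : Type*} [Ring R] [Nontrivial R] [Finite Rˣ]
    [IsCyclic Rˣ] (hR : ringChar R ≠ 2) {x : R} (hx : Even (orderOf x)) (hx0 : orderOf x ≠ 0) :
    x ^ (orderOf x / 2) = -1 := by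
  have hu : IsUnit x := IsUnit.of_pow_eq_one (pow_orderOf_eq_one x) hx0
  suffices hu.unit ^ (orderOf x / 2) = -1 by simpa using congrArg Units.val this
  have hord : orderOf hu.unit = orderOf x := by rw [← orderOf_units, hu.unit_spec]
  apply IsCyclic.eq_of_orderOf_eq_two
  · rw [← hord, orderOf_pow_orderOf_div (hord ▸ hx0) (hord ▸ even_iff_two_dvd.mp hx)]
  · rw [← orderOf_units, Units.val_neg, Units.val_one, orderOf_neg_one, if_neg hR]

lemma ZMod.natCast_pow_div_two_eq_neg_one {q g : ℕ} (hq : q.Prime) (hodd : Odd q)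
    (hg : orderOf (g : ZMod (2 * q)) = q - 1) : (g : ZMod (2 * q)) ^ ((q - 1) / 2) = -1 := by
  have hq3 : 3 ≤ q := by
    obtain ⟨k, rfl⟩ := hodd
    have := hq.two_le
    omega
  have : Fact (1 < 2 * q) := ⟨by omega⟩
  have : Fact q.Prime := ⟨hq⟩
  have : IsCyclic (ZMod (2 * q))ˣ :=
    (ZMod.isCyclic_units_two_mul_iff_of_odd q hodd).mpr inferInstance
  rw [← hg]
  refine pow_orderOf_div_two_eq_neg_one ?_ ?_ ?_
  · rw [ZMod.ringChar_zmod_n]; omega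
  · rw [hg]; exact Nat.Odd.sub_odd hodd odd_one
  · omega

section CyclotomicClasses

variable {q g : ℕ}

lemma lt_of_mem_Dcl (hq : q ≠ 0) {i j : ℕ} (hj : j ∈ Dcl q g i) : j < 2 * q := by
  obtain ⟨s, -, rfl⟩ := Finset.mem_image.mp hj
  exact Nat.mod_lt _ (by omega)

lemma mem_Dcl_iff (hq : 1 < q) (hodd : Odd q) (hg : (g : ZMod (2 * q)) ^ (q - 1) = 1)
    {i j : ℕ} : j ∈ Dcl q g i ↔ ∃ s, j = ((g : ZMod (2 * q)) ^ (2 * s + i)).val := by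
  have hval : ∀ e, ((g : ZMod (2 * q)) ^ e).val = g ^ e % (2 * q) := fun e => by
    rw [← Nat.cast_pow, ZMod.val_natCast]
  have hm : 2 * ((q - 1) / 2) = q - 1 :=
    Nat.two_mul_div_two_of_even (Nat.Odd.sub_odd hodd odd_one)
  set m := (q - 1) / 2
  simp only [Dcl, Finset.mem_image, Finset.mem_range, hval]
  constructor
  · rintro ⟨s, -, rfl⟩
    exact ⟨s, rfl⟩
  · rintro ⟨s, rfl⟩
    refine ⟨s % m, Nat.mod_lt _ (by omega), ?_⟩
    rw [← hval, ← hval]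
    congr 1
    have hs := Nat.mod_add_div s m
    calc (g : ZMod (2 * q)) ^ (2 * (s % m) + i)
        = (g : ZMod (2 * q)) ^ (2 * (s % m) + i) * ((g : ZMod (2 * q)) ^ (2 * m)) ^ (s / m) := by
          rw [hm, hg, one_pow, mul_one]
      _ = (g : ZMod (2 * q)) ^ (2 * s + i) := by
          rw [← pow_mul, ← pow_add]
          congr 1
          linarith

lemma two_mul_sub_mem_Dcl (hq4 : q % 4 = 3) (hneg : (g : ZMod (2 * q)) ^ ((q - 1) / 2) = -1)
    {i j : ℕ} (hi : i ≤ 1) (hj : j ∈ Dcl q g i) : 2 * q - j ∈ Dcl q g (1 - i) := by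
  have hodd : Odd q := Nat.odd_iff.mpr (by omega)
  have hg : (g : ZMod (2 * q)) ^ (q - 1) = 1 := by
    rw [← Nat.two_mul_div_two_of_even (Nat.Odd.sub_odd hodd odd_one), pow_mul', hneg, neg_one_sq]
  have : NeZero (2 * q) := ⟨by omega⟩
  have : Fact (1 < 2 * q) := ⟨by omega⟩
  have hu : IsUnit (g : ZMod (2 * q)) := IsUnit.of_pow_eq_one hg (by omega)
  obtain ⟨s, rfl⟩ := (mem_Dcl_iff (by omega) hodd hg).mp hj
  refine (mem_Dcl_iff (by omega) hodd hg).mpr ⟨s + (q - 1) / 4 + i, ?_⟩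
  -- `(q - 1) / 2` is odd, so multiplying by `-1` flips the parity of the exponent
  calc 2 * q - ((g : ZMod (2 * q)) ^ (2 * s + i)).val
      = (-(g : ZMod (2 * q)) ^ (2 * s + i)).val := by
        rw [ZMod.neg_val, if_neg (hu.pow _).ne_zero]
    _ = ((g : ZMod (2 * q)) ^ (2 * s + i + (q - 1) / 2)).val := by
        rw [pow_add _ (2 * s + i), hneg, mul_neg_one]
    _ = ((g : ZMod (2 * q)) ^ (2 * (s + (q - 1) / 4 + i) + (1 - i))).val := by
        congr 2
        omega

end CyclotomicClasses

lemma recip_gDpoly {F : Type} [Field F] {q g : ℕ} (hq4 : q % 4 = 3)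
    (hneg : (g : ZMod (2 * q)) ^ ((q - 1) / 2) = -1) {η : F} (hη : η ^ (2 * q) = 1) {i : ℕ}
    (hi : i ≤ 1) : recip F (gDpoly F q g i η) = gDpoly F q g (1 - i) η := by
  have hη0 : η ≠ 0 := by
    rintro rfl
    rw [zero_pow (by omega)] at hη
    exact zero_ne_one hη
  have hsub : ∀ k ≤ 1, ∀ j ∈ Dcl q g k, 2 * q - j ∈ Dcl q g (1 - k) := fun k hk j hj =>
    two_mul_sub_mem_Dcl hq4 hneg hk hj
  have hlt : ∀ k, ∀ j ∈ Dcl q g k, j < 2 * q := fun k j hj => lt_of_mem_Dcl (by omega) hj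
  rw [gDpoly, gDpoly, recip_prod_X_sub_C _ _ fun j _ => pow_ne_zero j hη0]
  refine Finset.prod_nbij' (fun j => 2 * q - j) (fun j => 2 * q - j) (hsub i hi)
    (fun j hj => by simpa [Nat.sub_sub_self hi] using hsub (1 - i) (by omega) j hj)
    (fun j hj => by have := hlt i j hj; omega) (fun j hj => by have := hlt (1 - i) j hj; omega)
    fun j hj => ?_
  have hj : j ≤ 2 * q := (hlt i j hj).le
  rw [inv_eq_of_mul_eq_one_right (by rw [← pow_add, Nat.add_sub_cancel' hj, hη])]

theorem stmt8_general (q g : ℕ) (hq : q.Prime) (hodd : Odd q)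
    (hg2q : orderOf ((g : ℕ) : ZMod (2 * q)) = q - 1)
    (hq4 : q % 4 = 3)
    (F : Type) [Field F]
    (η : F) (hη : IsPrimitiveRoot η (2 * q))
    (i : ℕ) (hi : i ∈ ({0, 1} : Set ℕ)) :
    recip F (gDpoly F q g i η) = gDpoly F q g ((i + 1) % 2) η := by
  have hi : i ≤ 1 := by rcases hi with rfl | rfl <;> simp
  rw [show (i + 1) % 2 = 1 - i by omega]
  exact recip_gDpoly hq4 (ZMod.natCast_pow_div_two_eq_neg_one hq hodd hg2q) hη.pow_eq_one hi

theorem stmt8 (q g : ℕ) (hq : q.Prime) (hodd : Odd q)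
    (hgq : orderOf ((g : ℕ) : ZMod q) = q - 1)
    (hg2q : orderOf ((g : ℕ) : ZMod (2 * q)) = q - 1)
    (hq4 : q % 4 = 3)
    (r : ℕ) (hr : r.Prime) (hrodd : Odd r)
    (hrD : r % (2 * q) ∈ Dcl q g 0)
    (F : Type) [Field F] [Fintype F] [CharP F r]
    (hcard : Fintype.card F = r ^ orderOf ((r : ℕ) : ZMod (2 * q)))
    (η : F) (hη : IsPrimitiveRoot η (2 * q))
    (i : ℕ) (hi : i ∈ ({0, 1} : Set ℕ)) :
    recip F (gDpoly F q g i η) = gDpoly F q g ((i + 1) % 2) η :=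
  stmt8_general q g hq hodd hg2q hq4 F η hη i hi
end

section
/- Let q be an odd prime with q ≡ 3 (mod 4), r an odd prime with r mod 2q ∈ D_0^{(2q)}, n = ord_{2q}(r), and η a primitive 2q-th root of unity in 𝔽_{r^n}. For each i ∈ {0,1}, let h(x) = (x^{2q} − 1)/g_{D_i}^{(2q)}(x) be the parity-check polynomial and h̃(x) = h(0)^{−1} x^{deg h} h(x^{−1}) its reciprocal. Then g_{D_i}^{(2q)}(x) divides h̃(x); equivalently, the cyclic code of length 2q over 𝔽_r with generator polynomial g_{D_i}^{(2q)}(x) contains its Euclidean dual code. -/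
open Polynomial

/-- Key arithmetic fact: if `q ≡ 3 (mod 4)` and `g` has order `q-1` mod `q`, then
`q` never divides `g^(2s+i) + g^(2t+i)` (the exponents have the same parity, while
`-1` is an odd power of `g`). -/
private lemma key_not_dvd (q g i s t : ℕ) (hq : q.Prime)
    (hgq : orderOf ((g : ℕ) : ZMod q) = q - 1)
    (hq4 : q % 4 = 3) :
    ¬ (q ∣ g ^ (2 * s + i) + g ^ (2 * t + i)) := by
  intro hdvd
  haveI := Fact.mk hq
  have hq3 : 3 ≤ q := by omega
  set a : ZMod q := ((g : ℕ) : ZMod q) with ha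
  have hpow1 : a ^ (q - 1) = 1 := by rw [← hgq]; exact pow_orderOf_eq_one a
  have hunit : IsUnit a := IsUnit.of_pow_eq_one hpow1 (by omega)
  have hm1 : a ^ ((q - 1) / 2) = -1 := by
    have hsq : (a ^ ((q - 1) / 2)) ^ 2 = 1 := by
      rw [← pow_mul]
      have h2 : (q - 1) / 2 * 2 = q - 1 := by omega
      rw [h2, hpow1]
    have hne1 : a ^ ((q - 1) / 2) ≠ 1 := by
      intro h1
      have hd := orderOf_dvd_of_pow_eq_one h1
      rw [hgq] at hd
      have := Nat.le_of_dvd (by omega) hd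
      omega
    have hfac : (a ^ ((q - 1) / 2) - 1) * (a ^ ((q - 1) / 2) + 1) = 0 := by
      have : (a ^ ((q - 1) / 2)) ^ 2 - 1 = 0 := by rw [hsq]; ring
      calc (a ^ ((q - 1) / 2) - 1) * (a ^ ((q - 1) / 2) + 1)
          = (a ^ ((q - 1) / 2)) ^ 2 - 1 := by ring
        _ = 0 := this
    rcases mul_eq_zero.mp hfac with hc | hc
    · exact absurd (sub_eq_zero.mp hc) hne1
    · exact eq_neg_of_add_eq_zero_left hc
  have hcast : a ^ (2 * s + i) + a ^ (2 * t + i) = 0 := by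
    have h0 : ((g ^ (2 * s + i) + g ^ (2 * t + i) : ℕ) : ZMod q) = 0 :=
      (ZMod.natCast_eq_zero_iff _ _).mpr hdvd
    push_cast at h0
    exact h0
  have heq : a ^ (2 * s + i) = a ^ ((q - 1) / 2 + (2 * t + i)) := by
    conv_rhs => rw [pow_add]
    rw [hm1]
    linear_combination hcast
  set u := hunit.unit with hu
  have huval : (u : ZMod q) = a := hunit.unit_spec
  have hordu : orderOf u = q - 1 := by rw [← orderOf_units, huval, hgq]
  have hueq : u ^ (2 * s + i) = u ^ ((q - 1) / 2 + (2 * t + i)) :=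
    Units.ext (by rw [Units.val_pow_eq_pow_val, Units.val_pow_eq_pow_val, huval]; exact heq)
  have hmod : (2 * s + i) ≡ ((q - 1) / 2 + (2 * t + i)) [MOD q - 1] := by
    have := pow_eq_pow_iff_modEq.mp hueq
    rwa [hordu] at this
  have hmod2 : (2 * s + i) % 2 = ((q - 1) / 2 + (2 * t + i)) % 2 :=
    Nat.ModEq.of_dvd ⟨(q - 1) / 2, by omega⟩ hmod
  omega

theorem stmt10 (q g : ℕ) (hq : q.Prime) (hodd : Odd q)
    (hgq : orderOf ((g : ℕ) : ZMod q) = q - 1)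
    (hg2q : orderOf ((g : ℕ) : ZMod (2 * q)) = q - 1)
    (hq4 : q % 4 = 3)
    (r : ℕ) (hr : r.Prime) (hrodd : Odd r)
    (hrD : r % (2 * q) ∈ Dcl q g 0)
    (F : Type) [Field F] [Fintype F] [CharP F r]
    (hcard : Fintype.card F = r ^ orderOf ((r : ℕ) : ZMod (2 * q)))
    (η : F) (hη : IsPrimitiveRoot η (2 * q))
    (i : ℕ) (hi : i ∈ ({0, 1} : Set ℕ))
    (h : F[X]) (hh : gDpoly F q g i η * h = X ^ (2 * q) - 1) :
    gDpoly F q g i η ∣ recip F h := by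
  have hq3 : 3 ≤ q := by omega
  have h2q : 0 < 2 * q := by omega
  have hηne : η ≠ 0 := by
    intro h0
    have := hη.pow_eq_one
    rw [h0, zero_pow (by omega)] at this
    exact zero_ne_one this
  -- the key fact: η^(j+k) ≠ 1 for j, k ∈ D_i
  have key : ∀ j ∈ Dcl q g i, ∀ k ∈ Dcl q g i, η ^ (j + k) ≠ 1 := by
    intro j hj k hk hcon
    simp only [Dcl, Finset.mem_image, Finset.mem_range] at hj hk
    obtain ⟨s, -, rfl⟩ := hj
    obtain ⟨t, -, rfl⟩ := hk
    rw [hη.pow_eq_one_iff_dvd] at hcon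
    have hqd : q ∣ g ^ (2 * s + i) % (2 * q) + g ^ (2 * t + i) % (2 * q) :=
      dvd_trans (dvd_mul_left q 2) hcon
    have e1 : g ^ (2 * s + i) % (2 * q) ≡ g ^ (2 * s + i) [MOD q] :=
      (Nat.mod_modEq _ _).of_dvd (dvd_mul_left q 2)
    have e2 : g ^ (2 * t + i) % (2 * q) ≡ g ^ (2 * t + i) [MOD q] :=
      (Nat.mod_modEq _ _).of_dvd (dvd_mul_left q 2)
    have : q ∣ g ^ (2 * s + i) + g ^ (2 * t + i) :=
      (Nat.modEq_zero_iff_dvd).mp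
        (((e1.add e2).symm).trans ((Nat.modEq_zero_iff_dvd).mpr hqd))
    exact key_not_dvd q g i s t hq hgq hq4 this
  -- it suffices to show the generator divides `reverse h`
  suffices hmain : gDpoly F q g i η ∣ h.reverse by exact hmain.mul_left _
  have hlt : ∀ x ∈ Dcl q g i, x < 2 * q := by
    intro x hx
    simp only [Dcl, Finset.mem_image, Finset.mem_range] at hx
    obtain ⟨s, -, rfl⟩ := hx
    exact Nat.mod_lt _ h2q
  rw [gDpoly]
  refine Finset.prod_dvd_of_coprime ?_ ?_
  · -- pairwise coprimality of the linear factors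
    intro a ha b hb hab
    refine isCoprime_X_sub_C_of_isUnit_sub ?_
    refine (sub_ne_zero.mpr ?_).isUnit
    intro he
    exact hab (hη.pow_inj (hlt a (Finset.mem_coe.mp ha)) (hlt b (Finset.mem_coe.mp hb)) he)
  · -- each linear factor divides `reverse h`
    intro j hj
    have hxne : η ^ j ≠ 0 := pow_ne_zero _ hηne
    have hyne : (η ^ j)⁻¹ ≠ 0 := inv_ne_zero hxne
    -- η^(-j) is a root of h
    have hroot : h.eval ((η ^ j)⁻¹) = 0 := by
      have hpow : ((η ^ j)⁻¹) ^ (2 * q) = 1 := by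
        rw [inv_pow, ← pow_mul, mul_comm j, pow_mul, hη.pow_eq_one, one_pow, inv_one]
      have he : (gDpoly F q g i η).eval ((η ^ j)⁻¹) * h.eval ((η ^ j)⁻¹) = 0 := by
        rw [← eval_mul, hh]
        simp [hpow]
      have hne : (gDpoly F q g i η).eval ((η ^ j)⁻¹) ≠ 0 := by
        rw [gDpoly, eval_prod]
        refine Finset.prod_ne_zero_iff.mpr ?_
        intro k hk
        simp only [eval_sub, eval_X, eval_C]
        intro hzero
        have hik : (η ^ j)⁻¹ = η ^ k := sub_eq_zero.mp hzero
        refine key j hj k hk ?_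
        rw [pow_add, ← hik, mul_inv_cancel₀ hxne]
      rcases mul_eq_zero.mp he with hc | hc
      · exact absurd hc hne
      · exact hc
    -- hence η^j is a root of `reverse h`
    rw [dvd_iff_isRoot]
    haveI := invertibleOfNonzero hyne
    have hiff := Polynomial.eval₂_reverse_eq_zero_iff (RingHom.id F) ((η ^ j)⁻¹) h
    rw [invOf_eq_inv, inv_inv] at hiff
    exact hiff.mpr hroot
end

section
/- Let q be an odd prime with q ≡ 3 (mod 4), r an odd prime with r mod 2q ∈ D_0^{(2q)}, n = ord_{2q}(r), and η a primitive 2q-th root of unity in 𝔽_{r^n}. For each i ∈ {0,1}, let h(x) = (x^{2q} − 1)/g_{E_i}^{(2q)}(x) and h̃(x) = h(0)^{−1} x^{deg h} h(x^{−1}). Then g_{E_i}^{(2q)}(x) divides h̃(x); equivalently, the cyclic code of length 2q over 𝔽_r with generator polynomial g_{E_i}^{(2q)}(x) contains its Euclidean dual code. -/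
open Polynomial

/-- When `q ≡ 3 (mod 4)` and `g` has order `q-1` modulo `q`, the sum `g^a + g^b`
with `a ≡ b (mod 2)` is never divisible by `q`. -/
lemma key_no_dvd (q g : ℕ) (hq : q.Prime) (hq4 : q % 4 = 3)
    (hgq : orderOf ((g : ℕ) : ZMod q) = q - 1)
    (a b : ℕ) (hab : a % 2 = b % 2) : ¬ (q ∣ g ^ a + g ^ b) := by
  haveI := Fact.mk hq
  intro hd
  have hq3 : 3 ≤ q := by
    have := hq.two_le; omega
  set G : ZMod q := ((g : ℕ) : ZMod q) with hG
  have hfin : IsOfFinOrder G := by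
    rw [← orderOf_pos_iff, hgq]; omega
  set u : (ZMod q)ˣ := hfin.unit with hu
  have hcu : (u : ZMod q) = G := rfl
  have hou : orderOf u = q - 1 := by
    rw [← orderOf_units, hcu, hgq]
  set m : ℕ := (q - 1) / 2 with hm
  have hm2 : 2 * m = q - 1 := by omega
  have hmodd : m % 2 = 1 := by omega
  have hGm : G ^ m = -1 := by
    have hsq : G ^ m * G ^ m = 1 := by
      rw [← pow_add]
      have : m + m = q - 1 := by omega
      rw [this, ← hgq, pow_orderOf_eq_one]
    rcases mul_self_eq_one_iff.mp hsq with h1 | h1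
    · exfalso
      have : orderOf G ∣ m := orderOf_dvd_of_pow_eq_one h1
      rw [hgq] at this
      have := Nat.le_of_dvd (by omega) this
      omega
    · exact h1
  have hzero : G ^ a + G ^ b = 0 := by
    have : ((g ^ a + g ^ b : ℕ) : ZMod q) = 0 :=
      (ZMod.natCast_eq_zero_iff _ _).mpr hd
    push_cast at this
    exact this
  have hGab : G ^ a = G ^ (m + b) := by
    rw [pow_add, hGm]
    linear_combination hzero
  have huab : u ^ a = u ^ (m + b) := by
    ext
    push_cast [hcu]
    exact hGab
  have hmod : a ≡ m + b [MOD q - 1] := by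
    rwa [pow_eq_pow_iff_modEq, hou] at huab
  have h2 : a ≡ m + b [MOD 2] := hmod.of_dvd (by omega)
  unfold Nat.ModEq at h2
  omega

/-- Every element of `E_i` yields the value `(η²)^(g^a)` with `a ≡ i (mod 2)`. -/
lemma Ecl_val (F : Type) [Field F] (q g i : ℕ) (hq : 0 < q) (η : F)
    (hη : IsPrimitiveRoot η (2 * q)) (j : ℕ) (hj : j ∈ Ecl q g i) :
    ∃ a : ℕ, a % 2 = i % 2 ∧ η ^ j = (η ^ 2) ^ (g ^ a) := by
  simp only [Ecl, Dcl, Finset.mem_image, Finset.mem_range] at hj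
  obtain ⟨u, ⟨s, hs, rfl⟩, rfl⟩ := hj
  refine ⟨2 * s + i, by omega, ?_⟩
  have hN : 0 < 2 * q := by omega
  have hone : η ^ (2 * q) = 1 := hη.pow_eq_one
  have hζone : (η ^ 2) ^ (2 * q) = 1 := by
    rw [← pow_mul, mul_comm, pow_mul, hone, one_pow]
  have hmod : ∀ x : ℕ, η ^ (x % (2 * q)) = η ^ x := by
    intro x
    conv_rhs => rw [← Nat.div_add_mod x (2 * q)]
    rw [pow_add, pow_mul, hone, one_pow, one_mul]
  have hmod2 : ∀ x : ℕ, (η ^ 2) ^ (x % (2 * q)) = (η ^ 2) ^ x := by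
    intro x
    conv_rhs => rw [← Nat.div_add_mod x (2 * q)]
    rw [pow_add, pow_mul, hζone, one_pow, one_mul]
  rw [hmod, pow_mul, hmod2]

theorem stmt11 (q g : ℕ) (hq : q.Prime) (hodd : Odd q)
    (hgq : orderOf ((g : ℕ) : ZMod q) = q - 1)
    (hg2q : orderOf ((g : ℕ) : ZMod (2 * q)) = q - 1)
    (hq4 : q % 4 = 3)
    (r : ℕ) (hr : r.Prime) (hrodd : Odd r)
    (hrD : r % (2 * q) ∈ Dcl q g 0)
    (F : Type) [Field F] [Fintype F] [CharP F r]
    (hcard : Fintype.card F = r ^ orderOf ((r : ℕ) : ZMod (2 * q)))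
    (η : F) (hη : IsPrimitiveRoot η (2 * q))
    (i : ℕ) (hi : i ∈ ({0, 1} : Set ℕ))
    (h : F[X]) (hh : gEpoly F q g i η * h = X ^ (2 * q) - 1) :
    gEpoly F q g i η ∣ recip F h := by
  have hq1 : 1 < q := hq.one_lt
  have hN : 0 < 2 * q := by omega
  have hζ : IsPrimitiveRoot (η ^ 2) q := hη.pow hN (by ring)
  have hη0 : η ≠ 0 := hη.ne_zero (by omega)
  -- the crucial fact: the inverse of an `E_i`-value is never an `E_i`-value
  have key : ∀ j ∈ Ecl q g i, ∀ j' ∈ Ecl q g i, (η ^ j)⁻¹ ≠ η ^ j' := by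
    intro j hj j' hj' heq
    obtain ⟨a, ha, hja⟩ := Ecl_val F q g i (by omega) η hη j hj
    obtain ⟨b, hb, hjb⟩ := Ecl_val F q g i (by omega) η hη j' hj'
    have hne : (η ^ 2) ^ (g ^ a) ≠ 0 := pow_ne_zero _ (pow_ne_zero _ hη0)
    have hone : (η ^ 2) ^ (g ^ a + g ^ b) = 1 := by
      rw [pow_add, ← hja, ← hjb, ← heq, mul_inv_cancel₀]
      exact fun h0 => hne (hja ▸ h0)
    have hdvd : q ∣ g ^ a + g ^ b := (hζ.pow_eq_one_iff_dvd _).mp hone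
    exact key_no_dvd q g hq hq4 hgq a b (ha.trans hb.symm) hdvd
  have hlt : ∀ j ∈ Ecl q g i, j < 2 * q := by
    intro j hj
    simp only [Ecl, Finset.mem_image] at hj
    obtain ⟨u, _, rfl⟩ := hj
    exact Nat.mod_lt _ hN
  have hinj : ∀ j ∈ Ecl q g i, ∀ j' ∈ Ecl q g i, j ≠ j' → η ^ j ≠ η ^ j' := by
    intro j hj j' hj' hne heq
    exact hne (hη.pow_inj (hlt j hj) (hlt j' hj') heq)
  unfold recip
  apply Dvd.dvd.mul_left
  unfold gEpoly
  apply Finset.prod_dvd_of_coprime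
  · intro j hj j' hj' hne
    exact isCoprime_X_sub_C_of_isUnit_sub
      (isUnit_iff_ne_zero.mpr (sub_ne_zero_of_ne (hinj j hj j' hj' hne)))
  · intro j hj
    rw [dvd_iff_isRoot]
    have hne0 : η ^ j ≠ 0 := pow_ne_zero _ hη0
    set y := (η ^ j)⁻¹ with hy
    have hy0 : y ≠ 0 := inv_ne_zero hne0
    haveI : Invertible y := invertibleOfNonzero hy0
    have hinv : ⅟ y = η ^ j := by rw [invOf_eq_inv, hy, inv_inv]
    have hevalh : eval y h = 0 := by
      have hE : eval y (gEpoly F q g i η) * eval y h = y ^ (2 * q) - 1 := by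
        rw [← eval_mul, hh]
        simp
      have hyN : y ^ (2 * q) = 1 := by
        rw [hy, inv_pow, ← pow_mul, mul_comm j, pow_mul, hη.pow_eq_one, one_pow, inv_one]
      have hgE : eval y (gEpoly F q g i η) ≠ 0 := by
        unfold gEpoly
        rw [eval_prod]
        apply Finset.prod_ne_zero_iff.mpr
        intro j' hj'
        simp only [eval_sub, eval_X, eval_C]
        exact sub_ne_zero_of_ne (key j hj j' hj')
      rw [hyN, sub_self] at hE
      exact (mul_eq_zero.mp hE).resolve_left hgE
    have hrev := eval₂_reverse_eq_zero_iff (RingHom.id F) y h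
    have : eval₂ (RingHom.id F) (⅟ y) (reverse h) = 0 := by
      rw [hrev, ← eval]
      exact hevalh
    rw [hinv] at this
    rw [IsRoot, eval]
    exact this
end

section
/- Let q be an odd prime with q ≡ 3 (mod 4), r an odd prime with r mod 2q ∈ D_0^{(2q)}, n = ord_{2q}(r), and η a primitive 2q-th root of unity in 𝔽_{r^n}. For any i, j ∈ {0,1}, let G(x) = g_{D_i}^{(2q)}(x)·g_{E_j}^{(2q)}(x), h(x) = (x^{2q} − 1)/G(x), and h̃(x) = h(0)^{−1} x^{deg h} h(x^{−1}). Then G(x) divides h̃(x); equivalently, the cyclic code of length 2q over 𝔽_r with generator polynomial G(x) contains its Euclidean dual code. -/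
open Polynomial

/-- Key arithmetic lemma: if `x` has order `2d` with `d` odd in `ZMod m` (with `m ∤ 2`),
then `x^a + x^b ≠ 0` whenever `a ≡ b (mod 2)`. -/
lemma keyA {m : ℕ} (hm : ¬ (m ∣ 2)) {d : ℕ} (hd : Odd d) {x : ZMod m}
    (hx : orderOf x = 2 * d) {a b : ℕ} (hab : a % 2 = b % 2) :
    x ^ a + x ^ b ≠ 0 := by
  intro hcon
  have hdpos : 0 < d := hd.pos
  have hfin : IsOfFinOrder x := by
    rw [← orderOf_pos_iff, hx]; omega
  have hxu : IsUnit x := hfin.isUnit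
  obtain ⟨u, hu⟩ := hxu
  have h1 : x ^ a = -x ^ b := eq_neg_of_add_eq_zero_left hcon
  -- squares are equal
  have h2 : x ^ (a * 2) = x ^ (b * 2) := by
    rw [pow_mul, pow_mul, h1, neg_sq]
  have h2u : u ^ (a * 2) = u ^ (b * 2) := by
    apply Units.ext
    rw [Units.val_pow_eq_pow_val, Units.val_pow_eq_pow_val, hu]
    exact h2
  have hou : orderOf u = 2 * d := by rw [← orderOf_units, hu, hx]
  have hmod : a * 2 ≡ b * 2 [MOD 2 * d] := by
    rw [← hou]; exact pow_eq_pow_iff_modEq.mp h2u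
  -- deduce a ≡ b [MOD d]
  have hd1 : (d : ℤ) ∣ (b : ℤ) - a := by
    have := (Nat.modEq_iff_dvd).mp hmod
    obtain ⟨c, hc⟩ := this
    push_cast at hc
    refine ⟨c, ?_⟩
    have : ((b : ℤ) - a) * 2 = (d * c) * 2 := by ring_nf; ring_nf at hc; linarith
    exact mul_right_cancel₀ (by norm_num) this
  have hd2 : (2 : ℤ) ∣ (b : ℤ) - a := by
    have : a ≡ b [MOD 2] := hab
    exact (Nat.modEq_iff_dvd).mp this
  have hcop : IsCoprime (2 : ℤ) (d : ℤ) := by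
    rw [Int.isCoprime_iff_gcd_eq_one]
    have h6 : Nat.gcd 2 d = 1 := Nat.coprime_two_left.mpr hd
    rw [show ((2 : ℤ)) = ((2 : ℕ) : ℤ) by norm_num, Int.gcd_natCast_natCast]
    exact h6
  have hdd : ((2 * d : ℕ) : ℤ) ∣ (b : ℤ) - a := by
    push_cast
    exact hcop.mul_dvd hd2 hd1
  have hmod2 : a ≡ b [MOD 2 * d] := (Nat.modEq_iff_dvd).mpr hdd
  have h3u : u ^ a = u ^ b := by
    rw [pow_eq_pow_iff_modEq, hou]; exact hmod2
  have h3 : x ^ a = x ^ b := by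
    rw [← hu, ← Units.val_pow_eq_pow_val, ← Units.val_pow_eq_pow_val, h3u]
  rw [h3] at hcon
  have h4 : ((2 : ℕ) : ZMod m) * x ^ b = 0 := by
    rw [Nat.cast_two, two_mul]; exact hcon
  have hub : IsUnit (x ^ b) := (hfin.isUnit).pow b
  have h5 : ((2 : ℕ) : ZMod m) = 0 := by
    obtain ⟨v, hv⟩ := hub
    have := congrArg (· * (↑v⁻¹ : ZMod m)) h4
    simpa [← hv, mul_assoc] using this
  rw [ZMod.natCast_eq_zero_iff] at h5
  exact hm h5

lemma g_odd {q g : ℕ} (hq3 : 3 ≤ q)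
    (hg2q : orderOf ((g : ℕ) : ZMod (2 * q)) = q - 1) : g % 2 = 1 := by
  haveI : NeZero (2 * q) := ⟨by omega⟩
  have hfin : IsOfFinOrder ((g : ℕ) : ZMod (2 * q)) := by
    rw [← orderOf_pos_iff, hg2q]; omega
  have hunit : IsUnit ((g : ℕ) : ZMod (2 * q)) := hfin.isUnit
  have hcop : Nat.Coprime g (2 * q) := (ZMod.isUnit_iff_coprime g (2 * q)).mp hunit
  have h2 : Nat.Coprime g 2 := Nat.Coprime.coprime_dvd_right ⟨q, rfl⟩ hcop
  have hodd : Odd g := Nat.Coprime.odd_of_right h2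
  exact Nat.odd_iff.mp hodd

lemma Dcl_odd {q g i : ℕ} (hq3 : 3 ≤ q)
    (hg2q : orderOf ((g : ℕ) : ZMod (2 * q)) = q - 1)
    {a : ℕ} (ha : a ∈ Dcl q g i) : a % 2 = 1 := by
  obtain ⟨s, _, rfl⟩ := Finset.mem_image.mp ha
  have hg : g % 2 = 1 := g_odd hq3 hg2q
  have hpow : g ^ (2 * s + i) % 2 = 1 := by
    have : Odd (g ^ (2 * s + i)) := (Nat.odd_iff.mpr hg).pow
    exact Nat.odd_iff.mp this
  calc g ^ (2 * s + i) % (2 * q) % 2 = g ^ (2 * s + i) % 2 :=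
        Nat.mod_mod_of_dvd _ ⟨q, rfl⟩
    _ = 1 := hpow

lemma Ecl_even {q g j : ℕ} {b : ℕ} (hb : b ∈ Ecl q g j) : b % 2 = 0 := by
  obtain ⟨u, _, rfl⟩ := Finset.mem_image.mp hb
  calc 2 * u % (2 * q) % 2 = 2 * u % 2 := Nat.mod_mod_of_dvd _ ⟨q, rfl⟩
    _ = 0 := by omega

/-- The key number-theoretic fact: no two elements of `D_i ∪ E_j` sum to `0 mod 2q`. -/
lemma key_sum {q g : ℕ} (hq : q.Prime)
    (hgq : orderOf ((g : ℕ) : ZMod q) = q - 1)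
    (hg2q : orderOf ((g : ℕ) : ZMod (2 * q)) = q - 1)
    (hq4 : q % 4 = 3) (i j : ℕ) :
    ∀ a ∈ Dcl q g i ∪ Ecl q g j, ∀ b ∈ Dcl q g i ∪ Ecl q g j, ¬ (2 * q ∣ a + b) := by
  have hq3 : 3 ≤ q := by
    have := hq.two_le; omega
  have hd : Odd ((q - 1) / 2) := by
    rw [Nat.odd_iff]; omega
  have h2d : 2 * ((q - 1) / 2) = q - 1 := by omega
  intro a ha b hb hdvd
  rcases Finset.mem_union.mp ha with haD | haE <;>
    rcases Finset.mem_union.mp hb with hbD | hbE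
  · -- both in Dcl
    obtain ⟨s, _, rfl⟩ := Finset.mem_image.mp haD
    obtain ⟨t, _, rfl⟩ := Finset.mem_image.mp hbD
    have hdvd' : 2 * q ∣ g ^ (2 * s + i) + g ^ (2 * t + i) := by
      have h1 : g ^ (2 * s + i) % (2 * q) + g ^ (2 * t + i) % (2 * q)
          ≡ g ^ (2 * s + i) + g ^ (2 * t + i) [MOD 2 * q] :=
        Nat.ModEq.add (Nat.mod_modEq _ _) (Nat.mod_modEq _ _)
      exact (Nat.modEq_zero_iff_dvd).mp ((h1.symm.trans (Nat.modEq_zero_iff_dvd.mpr hdvd)))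
    have hcast : ((g : ℕ) : ZMod (2 * q)) ^ (2 * s + i) + ((g : ℕ) : ZMod (2 * q)) ^ (2 * t + i) = 0 := by
      have := (ZMod.natCast_eq_zero_iff _ (2 * q)).mpr hdvd'
      push_cast at this
      exact this
    exact keyA (fun hdd => by have := Nat.le_of_dvd (by norm_num) hdd; omega)
      hd (by rw [h2d]; exact hg2q) (by omega) hcast
  · -- a odd, b even
    have h1 := Dcl_odd hq3 hg2q haD
    have h2 := Ecl_even hbE
    have h3 : 2 ∣ a + b := dvd_trans ⟨q, rfl⟩ hdvd
    omega
  · -- a even, b odd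
    have h1 := Ecl_even haE
    have h2 := Dcl_odd hq3 hg2q hbD
    have h3 : 2 ∣ a + b := dvd_trans ⟨q, rfl⟩ hdvd
    omega
  · -- both in Ecl
    obtain ⟨u, hu, rfl⟩ := Finset.mem_image.mp haE
    obtain ⟨v, hv, rfl⟩ := Finset.mem_image.mp hbE
    obtain ⟨s, _, rfl⟩ := Finset.mem_image.mp hu
    obtain ⟨t, _, rfl⟩ := Finset.mem_image.mp hv
    have hdvd' : 2 * q ∣ 2 * (g ^ (2 * s + j) + g ^ (2 * t + j)) := by
      have h1 : 2 * (g ^ (2 * s + j) % (2 * q)) % (2 * q) + 2 * (g ^ (2 * t + j) % (2 * q)) % (2 * q)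
          ≡ 2 * g ^ (2 * s + j) + 2 * g ^ (2 * t + j) [MOD 2 * q] := by
        refine Nat.ModEq.add ?_ ?_ <;>
          exact (Nat.mod_modEq _ _).trans (Nat.ModEq.mul_left 2 (Nat.mod_modEq _ _))
      have h2 := (Nat.modEq_zero_iff_dvd).mp ((h1.symm.trans (Nat.modEq_zero_iff_dvd.mpr hdvd)))
      have : 2 * g ^ (2 * s + j) + 2 * g ^ (2 * t + j)
          = 2 * (g ^ (2 * s + j) + g ^ (2 * t + j)) := by ring
      rwa [this] at h2
    have hqdvd : q ∣ g ^ (2 * s + j) + g ^ (2 * t + j) := by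
      obtain ⟨c, hc⟩ := hdvd'
      refine ⟨c, ?_⟩
      have h3 : 2 * q * c = 2 * (q * c) := by ring
      omega
    have hcast : ((g : ℕ) : ZMod q) ^ (2 * s + j) + ((g : ℕ) : ZMod q) ^ (2 * t + j) = 0 := by
      have := (ZMod.natCast_eq_zero_iff _ q).mpr hqdvd
      push_cast at this
      exact this
    exact keyA (fun hdd => by have := Nat.le_of_dvd (by norm_num) hdd; omega)
      hd (by rw [h2d]; exact hgq) (by omega) hcast

theorem stmt12 (q g : ℕ) (hq : q.Prime) (hodd : Odd q)
    (hgq : orderOf ((g : ℕ) : ZMod q) = q - 1)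
    (hg2q : orderOf ((g : ℕ) : ZMod (2 * q)) = q - 1)
    (hq4 : q % 4 = 3)
    (r : ℕ) (hr : r.Prime) (hrodd : Odd r)
    (hrD : r % (2 * q) ∈ Dcl q g 0)
    (F : Type) [Field F] [Fintype F] [CharP F r]
    (hcard : Fintype.card F = r ^ orderOf ((r : ℕ) : ZMod (2 * q)))
    (η : F) (hη : IsPrimitiveRoot η (2 * q))
    (i j : ℕ) (hi : i ∈ ({0, 1} : Set ℕ)) (hj : j ∈ ({0, 1} : Set ℕ))
    (h : F[X]) (hh : gDpoly F q g i η * gEpoly F q g j η * h = X ^ (2 * q) - 1) :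
    gDpoly F q g i η * gEpoly F q g j η ∣ recip F h := by
  have hq3 : 3 ≤ q := by have := hq.two_le; omega
  have h2q : 0 < 2 * q := by omega
  have hη2q : η ^ (2 * q) = 1 := hη.pow_eq_one
  have hη0 : η ≠ 0 := by
    intro h0
    rw [h0, zero_pow (by omega)] at hη2q
    exact zero_ne_one hη2q
  -- disjointness of Dcl and Ecl
  have hdisj : Disjoint (Dcl q g i) (Ecl q g j) := by
    rw [Finset.disjoint_left]
    intro a haD haE
    have h1 := Dcl_odd hq3 hg2q haD
    have h2 := Ecl_even haE
    omega
  have hP : gDpoly F q g i η * gEpoly F q g j η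
      = ∏ k ∈ Dcl q g i ∪ Ecl q g j, (X - C (η ^ k)) := by
    rw [gDpoly, gEpoly, ← Finset.prod_union hdisj]
  set S : Finset ℕ := Dcl q g i ∪ Ecl q g j with hS
  have key := key_sum hq hgq hg2q hq4 i j
  have hSlt : ∀ a ∈ S, a < 2 * q := by
    intro a ha
    rcases Finset.mem_union.mp ha with h' | h'
    · obtain ⟨s, _, rfl⟩ := Finset.mem_image.mp h'
      exact Nat.mod_lt _ h2q
    · obtain ⟨u, _, rfl⟩ := Finset.mem_image.mp h'
      exact Nat.mod_lt _ h2q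
  -- h has nonzero constant coefficient
  have hh0 : h.coeff 0 ≠ 0 := by
    intro h0
    rw [coeff_zero_eq_eval_zero] at h0
    have heval := congrArg (Polynomial.eval 0) hh
    rw [eval_mul, h0, mul_zero, eval_sub, eval_pow, eval_X, eval_one,
      zero_pow (show 2 * q ≠ 0 by omega), zero_sub] at heval
    have h1 : (-1 : F) = 0 := heval.symm
    rw [neg_eq_zero] at h1
    exact one_ne_zero h1
  -- main divisibility: P ∣ reverse h
  have hdvdrev : gDpoly F q g i η * gEpoly F q g j η ∣ h.reverse := by
    rw [hP]
    apply Finset.prod_dvd_of_coprime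
    · intro a ha b hb hab
      have : η ^ a ≠ η ^ b := fun hEq => hab (hη.pow_inj (hSlt a ha) (hSlt b hb) hEq)
      exact isCoprime_X_sub_C_of_isUnit_sub (sub_ne_zero_of_ne this).isUnit
    · intro k hk
      rw [dvd_iff_isRoot]
      have hklt : k < 2 * q := hSlt k hk
      set w : F := η ^ (2 * q - k) with hw
      have hw0 : w ≠ 0 := pow_ne_zero _ hη0
      haveI : Invertible w := invertibleOfNonzero hw0
      have hinv : ⅟ w = η ^ k := by
        apply invOf_eq_right_inv
        rw [hw, ← pow_add]
        have : 2 * q - k + k = 2 * q := by omega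
        rw [this, hη2q]
      -- h vanishes at w
      have hweval : h.eval w = 0 := by
        have hev := congrArg (Polynomial.eval w) hh
        have hw2q : w ^ (2 * q) = 1 := by
          rw [hw, ← pow_mul, mul_comm (2 * q - k) (2 * q), pow_mul, hη2q, one_pow]
        rw [eval_mul, eval_mul, eval_sub, eval_pow, eval_X, eval_one, hw2q, sub_self] at hev
        have hPne : (gDpoly F q g i η).eval w * (gEpoly F q g j η).eval w ≠ 0 := by
          have : ((gDpoly F q g i η) * (gEpoly F q g j η)).eval w ≠ 0 := by
            rw [hP, eval_prod]
            apply Finset.prod_ne_zero_iff.mpr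
            intro m hm
            rw [eval_sub, eval_X, eval_C, sub_ne_zero]
            intro hEq
            have : η ^ (m + k) = 1 := by
              rw [pow_add, ← hEq, hw, ← pow_add]
              have : 2 * q - k + k = 2 * q := by omega
              rw [this, hη2q]
            exact key m hm k hk ((hη.pow_eq_one_iff_dvd _).mp this)
          rwa [eval_mul] at this
        rcases mul_eq_zero.mp hev with h' | h'
        · exact absurd h' hPne
        · exact h'
      -- hence reverse h vanishes at η^k
      have hiff := Polynomial.eval₂_reverse_eq_zero_iff (RingHom.id F) w h
      rw [hinv] at hiff
      exact hiff.mpr hweval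
  -- conclude
  rw [recip]
  exact Dvd.dvd.mul_left hdvdrev _
end

section
/- Let q be an odd prime, r an odd prime with r mod 2q ∈ D_0^{(2q)}, and ℓ_k = ord_{2q}(r). Then for each i ∈ {0,1}, the set D_i^{(2q)} is a disjoint union of exactly θ = (q−1)/(2ℓ_k) distinct r-cyclotomic cosets modulo 2q, each of size ℓ_k; consequently g_{D_i}^{(2q)}(x) = ∏_{j=1}^{θ} M_{d_{i_j}}(x) is a product of θ monic irreducible polynomials over 𝔽_r, each of degree ℓ_k, where M_t(x) = ∏_{j ∈ C_{(t,2q)}}(x − η^j) is the minimal polynomial of η^t over 𝔽_r. -/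
open Polynomial

/-!
Write `n = (q - 1) / 2` and `r ≡ g^(2s)`. Since `g` has order `2n` modulo `2q`, the class
`D_i` is `{g^(2a+i) : a mod n}` and multiplication by `r` is the shift `a ↦ a + s`. The
`r`-cosets in `D_i` are thus the classes of `a` modulo `θ = gcd(n, s)`, represented by
`g^(2j+i)` for `j < θ`, each of size `n / θ = ord_{2q}(r)`.

The roots of `M_t` form the Frobenius orbit of `η^t`, so `M_t` is fixed by Frobenius: its
coefficients lie in the prime field, and it equals the minimal polynomial of `η^t` there.
-/

open Set Function

theorem Nat.exists_mul_modEq_gcd (n s : ℕ) : ∃ c, s * c ≡ n.gcd s [MOD n] := by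
  rcases lt_or_ge (s.gcd n) n with h | h
  · obtain ⟨c, -, hc⟩ := Nat.exists_mul_mod_eq_gcd h
    rw [Nat.gcd_comm] at h hc
    exact ⟨c, by rw [Nat.ModEq, hc, Nat.mod_eq_of_lt h]⟩
  · refine ⟨1, ?_⟩
    rcases n.eq_zero_or_pos with rfl | hn
    · simp [Nat.ModEq]
    have hgcd : s.gcd n = n := le_antisymm (Nat.gcd_le_right s hn) h
    rw [mul_one, Nat.gcd_comm, hgcd, Nat.ModEq, Nat.mod_self,
      Nat.mod_eq_zero_of_dvd (Nat.gcd_eq_right_iff_dvd.mp hgcd)]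

theorem Nat.mul_modEq_mul_iff_modEq_div_gcd {n s a b : ℕ} (hn : 0 < n) :
    s * a ≡ s * b [MOD n] ↔ a ≡ b [MOD n / n.gcd s] := by
  refine ⟨Nat.ModEq.cancel_left_div_gcd hn, fun h => ?_⟩
  obtain ⟨m, hm⟩ := Nat.gcd_dvd_right n s
  have := (h.mul_left' (n.gcd s)).mul_left m
  rwa [Nat.mul_div_cancel' (Nat.gcd_dvd_left n s), ← mul_assoc, ← mul_assoc, mul_comm m,
    ← hm] at this

theorem Set.ncard_range_of_eq_iff_modEq {α : Type*} {f : ℕ → α} {ℓ : ℕ} (hℓ : 0 < ℓ)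
    (hf : ∀ a b, f a = f b ↔ a ≡ b [MOD ℓ]) : (range f).ncard = ℓ := by
  have hrange : range f = f '' Iio ℓ := by
    refine (image_subset_range _ _).antisymm' ?_
    rintro _ ⟨a, rfl⟩
    exact ⟨a % ℓ, Nat.mod_lt a hℓ, (hf _ _).2 (Nat.mod_modEq a ℓ)⟩
  rw [hrange, InjOn.ncard_image, ← Finset.coe_range, ncard_coe_finset, Finset.card_range]
  exact fun a ha b hb hab => ((hf a b).1 hab).eq_of_lt_of_lt ha hb

section ResidueClasses

variable {α : Type*} {φ : ℕ → α} {n : ℕ}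

theorem disjoint_range_add_mul (hφ : ∀ a b, φ a = φ b ↔ a ≡ b [MOD n]) (s : ℕ)
    {j j' : ℕ} (hj : j < n.gcd s) (hj' : j' < n.gcd s) (hne : j ≠ j') :
    Disjoint (range fun k => φ (j + s * k)) (range fun k => φ (j' + s * k)) := by
  refine disjoint_left.2 ?_
  rintro _ ⟨k, rfl⟩ ⟨k', hk⟩
  have hs : ∀ k, s * k ≡ 0 [MOD n.gcd s] := fun k =>
    Nat.modEq_zero_iff_dvd.2 (dvd_mul_of_dvd_left (Nat.gcd_dvd_right n s) k)
  have hjj' : j' ≡ j [MOD n.gcd s] := Nat.ModEq.add_right_cancel ((hs k').trans (hs k).symm)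
    (((hφ _ _).1 hk).of_dvd (Nat.gcd_dvd_left n s))
  exact hne (hjj'.eq_of_lt_of_lt hj' hj).symm

theorem iUnion_range_add_mul (hφ : ∀ a b, φ a = φ b ↔ a ≡ b [MOD n]) (s : ℕ)
    (hn : 0 < n) : ⋃ j : Fin (n.gcd s), range (fun k => φ (j + s * k)) = φ '' Iio n := by
  apply Subset.antisymm
  · rintro _ ⟨_, ⟨j, rfl⟩, k, rfl⟩
    exact ⟨(j + s * k) % n, Nat.mod_lt _ hn, (hφ _ _).2 (Nat.mod_modEq _ n)⟩
  · rintro _ ⟨a, -, rfl⟩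
    obtain ⟨c, hc⟩ := Nat.exists_mul_modEq_gcd n s
    have hθ : 0 < n.gcd s := Nat.gcd_pos_of_pos_left s hn
    refine mem_iUnion.2 ⟨⟨a % n.gcd s, Nat.mod_lt a hθ⟩, c * (a / n.gcd s), (hφ _ _).2 ?_⟩
    calc a % n.gcd s + s * (c * (a / n.gcd s))
        = a % n.gcd s + s * c * (a / n.gcd s) := by rw [mul_assoc]
      _ ≡ a % n.gcd s + n.gcd s * (a / n.gcd s) [MOD n] := (hc.mul_right _).add_left _
      _ = a := Nat.mod_add_div a _

theorem ncard_range_add_mul (hφ : ∀ a b, φ a = φ b ↔ a ≡ b [MOD n]) (s : ℕ) (hn : 0 < n)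
    (j : ℕ) : (range fun k => φ (j + s * k)).ncard = n / n.gcd s := by
  refine ncard_range_of_eq_iff_modEq (Nat.div_pos (Nat.gcd_le_left s hn)
    (Nat.gcd_pos_of_pos_left s hn)) fun a b => ?_
  rw [hφ, ← Nat.mul_modEq_mul_iff_modEq_div_gcd hn]
  exact ⟨Nat.ModEq.add_left_cancel' j, Nat.ModEq.add_left j⟩

end ResidueClasses

section OrderTwoN

variable {M : Type*} [Monoid M] {x : M} {n : ℕ}

theorem pow_two_mul_add_eq_pow_two_mul_add_iff (hx : orderOf x = 2 * n) (hn : n ≠ 0)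
    (i a b : ℕ) : x ^ (2 * a + i) = x ^ (2 * b + i) ↔ a ≡ b [MOD n] := by
  rw [(orderOf_pos_iff.1 (by omega)).pow_eq_pow_iff_modEq, hx]
  exact ⟨fun h => Nat.ModEq.mul_left_cancel' two_ne_zero (h.add_right_cancel' i),
    fun h => (h.mul_left' 2).add_right i⟩

theorem orderOf_pow_two_mul (hx : orderOf x = 2 * n) (hn : n ≠ 0) (s : ℕ) :
    orderOf (x ^ (2 * s)) = n / n.gcd s := by
  rw [(orderOf_pos_iff.1 (by omega)).orderOf_pow, hx, Nat.gcd_mul_left,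
    Nat.mul_div_mul_left _ _ two_pos]

end OrderTwoN

theorem Ccoset_subset_Iio {q : ℕ} (hq : 0 < q) (r t : ℕ) : Ccoset q r t ⊆ Iio (2 * q) := by
  rintro _ ⟨k, rfl⟩
  exact Nat.mod_lt _ (by omega)

theorem Ccoset_finite {q : ℕ} (hq : 0 < q) (r t : ℕ) : (Ccoset q r t).Finite :=
  (finite_Iio _).subset (Ccoset_subset_Iio hq r t)

theorem Ccoset_eq_range (q r t : ℕ) : Ccoset q r t = range fun k => t * r ^ k % (2 * q) := by
  ext y
  exact exists_congr fun k => eq_comm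

section CyclotomicClasses

variable {q g r n s : ℕ}

theorem pow_mod_eq_pow_mod_iff (hg : orderOf (g : ZMod (2 * q)) = 2 * n) (hn : n ≠ 0)
    (i a b : ℕ) :
    g ^ (2 * a + i) % (2 * q) = g ^ (2 * b + i) % (2 * q) ↔ a ≡ b [MOD n] := by
  rw [← pow_two_mul_add_eq_pow_two_mul_add_iff hg hn i a b, ← ZMod.natCast_eq_natCast_iff']
  push_cast
  rfl

theorem Ccoset_pow_mod_eq_range (hrg : (r : ZMod (2 * q)) = (g : ZMod (2 * q)) ^ (2 * s))
    (i j : ℕ) :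
    Ccoset q r (g ^ (2 * j + i) % (2 * q)) =
      range fun k => g ^ (2 * (j + s * k) + i) % (2 * q) := by
  rw [Ccoset_eq_range]
  congr 1 with k
  rw [← ZMod.natCast_eq_natCast_iff']
  push_cast [ZMod.natCast_mod]
  rw [hrg]
  ring

theorem Ccoset_partition (hg : orderOf (g : ZMod (2 * q)) = 2 * n) (hn : n ≠ 0)
    (hrg : (r : ZMod (2 * q)) = (g : ZMod (2 * q)) ^ (2 * s)) (i : ℕ) :
    Pairwise (Disjoint on fun j : Fin (n.gcd s) => Ccoset q r (g ^ (2 * j + i) % (2 * q))) ∧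
      ⋃ j : Fin (n.gcd s), Ccoset q r (g ^ (2 * j + i) % (2 * q)) =
        ↑((Finset.range n).image fun a => g ^ (2 * a + i) % (2 * q)) ∧
      ∀ j, (Ccoset q r (g ^ (2 * j + i) % (2 * q))).ncard = n / n.gcd s := by
  have hφ := pow_mod_eq_pow_mod_iff hg hn i
  simp only [Ccoset_pow_mod_eq_range hrg]
  refine ⟨fun j j' hne => disjoint_range_add_mul hφ s j.2 j'.2 (Fin.val_ne_of_ne hne), ?_,
    ncard_range_add_mul hφ s (Nat.pos_of_ne_zero hn)⟩
  rw [iUnion_range_add_mul hφ s (Nat.pos_of_ne_zero hn), Finset.coe_image, Finset.coe_range]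

end CyclotomicClasses

section PrimeSubfield

variable {F : Type*} [Field F] (p : ℕ) [Fact p.Prime] [CharP F p]

def frobeniusBotAlgHom : F →ₐ[(⊥ : Subfield F)] F where
  toRingHom := frobenius F p
  commutes' c := (Subfield.mem_bot_iff_pow_eq_self F p).1 c.2

theorem aeval_pow_char_pow_eq_zero {P : (⊥ : Subfield F)[X]} {β : F} (h : aeval β P = 0)
    (k : ℕ) : aeval (β ^ p ^ k) P = 0 := by
  induction k with
  | zero => simpa using h
  | succ k ih =>
    have := aeval_algHom_apply (frobeniusBotAlgHom p) (β ^ p ^ k) P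
    rw [ih, map_zero] at this
    rwa [pow_succ, pow_mul]

theorem mem_lifts_bot_of_map_frobenius {f : F[X]} (h : f.map (frobenius F p) = f) :
    f ∈ lifts (⊥ : Subfield F).subtype := by
  refine (lifts_iff_coeff_lifts f).2 fun k => ⟨⟨f.coeff k, ?_⟩, rfl⟩
  rw [Subfield.mem_bot_iff_pow_eq_self F p, ← frobenius_def, ← coeff_map, h]

theorem map_minpoly_bot_eq_prod_of_orbit {β : F} {S : Finset F}
    (hS : (S : Set F) = range fun k => β ^ p ^ k) :
    IsIntegral (⊥ : Subfield F) β ∧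
      (minpoly (⊥ : Subfield F) β).map (⊥ : Subfield F).subtype = ∏ s ∈ S, (X - C s) := by
  classical
  have hmem : ∀ {s}, s ∈ S ↔ ∃ k, β ^ p ^ k = s := by
    intro s; rw [← Finset.mem_coe, hS, mem_range]
  have hβ : β ∈ S := hmem.2 ⟨0, by simp⟩
  have hfrob : S.image (frobenius F p) = S := by
    refine Finset.eq_of_subset_of_card_le (fun t ht => ?_)
      (Finset.card_image_of_injective _ (frobenius_inj F p)).ge
    obtain ⟨s, hs, rfl⟩ := Finset.mem_image.1 ht
    obtain ⟨k, rfl⟩ := hmem.1 hs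
    exact hmem.2 ⟨k + 1, by rw [frobenius_def, ← pow_mul, pow_succ]⟩
  have hmonic : (∏ s ∈ S, (X - C s)).Monic := monic_prod_of_monic _ _ fun s _ => monic_X_sub_C s
  have hfixed : (∏ s ∈ S, (X - C s)).map (frobenius F p) = ∏ s ∈ S, (X - C s) := by
    conv_rhs => rw [← hfrob, Finset.prod_image fun a _ b _ h => frobenius_inj F p h]
    simp only [Polynomial.map_prod, Polynomial.map_sub, map_X, map_C]
  obtain ⟨Q, hQ, -, hQmonic⟩ :=
    lifts_and_natDegree_eq_and_monic (mem_lifts_bot_of_map_frobenius p hfixed) hmonic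
  have hQβ : aeval β Q = 0 := by
    rw [aeval_def, eval₂_eq_eval_map]
    exact hQ ▸ (eval_prod _ _ _).trans (Finset.prod_eq_zero hβ (by simp))
  have hint : IsIntegral (⊥ : Subfield F) β := ⟨Q, hQmonic, hQβ⟩
  have hdvd :
      (minpoly (⊥ : Subfield F) β).map (⊥ : Subfield F).subtype ∣ ∏ s ∈ S, (X - C s) :=
    hQ ▸ map_dvd (⊥ : Subfield F).subtype (minpoly.dvd _ _ hQβ)
  refine ⟨hint, eq_of_monic_of_associated ((minpoly.monic hint).map _) hmonic
    (associated_of_dvd_dvd hdvd ?_)⟩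
  have hne : (minpoly (⊥ : Subfield F) β).map (⊥ : Subfield F).subtype ≠ 0 :=
    (Polynomial.map_ne_zero_iff (⊥ : Subfield F).subtype.injective).2 (minpoly.ne_zero hint)
  rw [Finset.prod_eq_multiset_prod, Multiset.prod_X_sub_C_dvd_iff_le_roots hne,
    Multiset.le_iff_subset S.nodup]
  intro s hs
  obtain ⟨k, rfl⟩ := hmem.1 hs
  rw [mem_roots hne, IsRoot, eval_map]
  exact aeval_pow_char_pow_eq_zero p (minpoly.aeval _ β) k

end PrimeSubfield

theorem Mpoly_monic_natDegree_irreducible (F : Type) [Field F] {q r : ℕ} [Fact r.Prime]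
    [CharP F r] (hq : 0 < q) {η : F} (hη : IsPrimitiveRoot η (2 * q)) (t : ℕ) :
    (Mpoly F q r t η).Monic ∧ (Mpoly F q r t η).natDegree = (Ccoset q r t).ncard ∧
      ∃ P : (⊥ : Subfield F)[X], Irreducible P ∧
        P.map (⊥ : Subfield F).subtype = Mpoly F q r t η := by
  classical
  have hfin := Ccoset_finite hq r t
  have hinj : InjOn (η ^ ·) (hfin.toFinset : Set ℕ) := fun a ha b hb =>
    hη.pow_inj (Ccoset_subset_Iio hq r t (hfin.mem_toFinset.1 ha))
      (Ccoset_subset_Iio hq r t (hfin.mem_toFinset.1 hb))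
  have hM : Mpoly F q r t η = ∏ s ∈ hfin.toFinset.image (η ^ ·), (X - C s) := by
    rw [Mpoly, finprod_mem_eq_finite_toFinset_prod _ hfin, Finset.prod_image hinj]
  have horbit : ((hfin.toFinset.image (η ^ ·) : Finset F) : Set F) =
      range fun k => (η ^ t) ^ r ^ k := by
    rw [Finset.coe_image, hfin.coe_toFinset, Ccoset_eq_range, ← range_comp]
    congr 1 with k
    rw [comp_apply, hη.eq_orderOf, pow_mod_orderOf, pow_mul]
  obtain ⟨hint, hmin⟩ := map_minpoly_bot_eq_prod_of_orbit r horbit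
  refine ⟨hM ▸ monic_prod_of_monic _ _ fun s _ => monic_X_sub_C s, ?_,
    minpoly _ (η ^ t), minpoly.irreducible hint, hmin.trans hM.symm⟩
  rw [hM, natDegree_finsetProd_X_sub_C_eq_card, Finset.card_image_of_injOn hinj,
    ncard_eq_toFinset_card _ hfin]

theorem gDpoly_eq_prod_Mpoly (F : Type) [Field F] {q g i r : ℕ} (hq : 0 < q) (η : F)
    {ι : Type*} [Fintype ι] (d : ι → ℕ)
    (hdisj : Pairwise (Disjoint on fun j => Ccoset q r (d j)))
    (hunion : ⋃ j, Ccoset q r (d j) = Dcl q g i) :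
    gDpoly F q g i η = ∏ j, Mpoly F q r (d j) η := by
  rw [gDpoly, ← finprod_mem_coe_finset, ← hunion,
    finprod_mem_iUnion hdisj fun j => Ccoset_finite hq r (d j), finprod_eq_prod_of_fintype]
  rfl

theorem stmt13_general (q g : ℕ) (hodd : Odd q)
    (hg2q : orderOf ((g : ℕ) : ZMod (2 * q)) = q - 1)
    (r : ℕ) (hr : r.Prime)
    (hrD : r % (2 * q) ∈ Dcl q g 0)
    (F : Type) [Field F] [CharP F r]
    (η : F) (hη : IsPrimitiveRoot η (2 * q))
    (i : ℕ) :
    ∃ d : Fin ((q - 1) / (2 * orderOf ((r : ℕ) : ZMod (2 * q)))) → ℕ,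
      (∀ j j', j ≠ j' → Disjoint (Ccoset q r (d j)) (Ccoset q r (d j'))) ∧
      (⋃ j, Ccoset q r (d j)) = ↑(Dcl q g i) ∧
      (∀ j, (Ccoset q r (d j)).ncard = orderOf ((r : ℕ) : ZMod (2 * q))) ∧
      gDpoly F q g i η = ∏ j, Mpoly F q r (d j) η ∧
      (∀ j, (Mpoly F q r (d j) η).Monic ∧
        (Mpoly F q r (d j) η).natDegree = orderOf ((r : ℕ) : ZMod (2 * q)) ∧
        ∃ p : Polynomial (⊥ : Subfield F), Irreducible p ∧
          p.map (⊥ : Subfield F).subtype = Mpoly F q r (d j) η) := by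
  have := Fact.mk hr
  obtain ⟨s, hs, hgr⟩ := Finset.mem_image.1 hrD
  set n := (q - 1) / 2
  have hn : n ≠ 0 := by rw [Finset.mem_range] at hs; omega
  have hq1 : q - 1 = 2 * n := by obtain ⟨k, rfl⟩ := hodd; omega
  have hrg : (r : ZMod (2 * q)) = (g : ZMod (2 * q)) ^ (2 * s) := by
    rw [(ZMod.natCast_eq_natCast_iff' _ _ _).2 hgr.symm]
    push_cast
    rfl
  have hℓ : orderOf (r : ZMod (2 * q)) = n / n.gcd s :=
    hrg ▸ orderOf_pow_two_mul (hg2q.trans hq1) hn s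
  have hθ : (q - 1) / (2 * (n / n.gcd s)) = n.gcd s := by
    rw [hq1, Nat.mul_div_mul_left _ _ two_pos, Nat.div_div_self (Nat.gcd_dvd_left n s) hn]
  obtain ⟨hdisj, hunion, hcard⟩ := Ccoset_partition (hg2q.trans hq1) hn hrg i
  rw [hℓ, hθ]
  refine ⟨fun j => g ^ (2 * j + i) % (2 * q), fun j j' hne => hdisj hne, hunion, fun j => hcard j,
    gDpoly_eq_prod_Mpoly F hodd.pos η _ hdisj hunion, fun j => ?_⟩
  obtain ⟨hmonic, hdeg, hirr⟩ := Mpoly_monic_natDegree_irreducible F hodd.pos hη _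
  exact ⟨hmonic, hdeg.trans (hcard j), hirr⟩

theorem stmt13 (q g : ℕ) (hq : q.Prime) (hodd : Odd q)
    (hgq : orderOf ((g : ℕ) : ZMod q) = q - 1)
    (hg2q : orderOf ((g : ℕ) : ZMod (2 * q)) = q - 1)
    (r : ℕ) (hr : r.Prime) (hrodd : Odd r)
    (hrD : r % (2 * q) ∈ Dcl q g 0)
    (F : Type) [Field F] [Fintype F] [CharP F r]
    (hcard : Fintype.card F = r ^ orderOf ((r : ℕ) : ZMod (2 * q)))
    (η : F) (hη : IsPrimitiveRoot η (2 * q))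
    (i : ℕ) (hi : i ∈ ({0, 1} : Set ℕ)) :
    ∃ d : Fin ((q - 1) / (2 * orderOf ((r : ℕ) : ZMod (2 * q)))) → ℕ,
      (∀ j j', j ≠ j' → Disjoint (Ccoset q r (d j)) (Ccoset q r (d j'))) ∧
      (⋃ j, Ccoset q r (d j)) = ↑(Dcl q g i) ∧
      (∀ j, (Ccoset q r (d j)).ncard = orderOf ((r : ℕ) : ZMod (2 * q))) ∧
      gDpoly F q g i η = ∏ j, Mpoly F q r (d j) η ∧
      (∀ j, (Mpoly F q r (d j) η).Monic ∧
        (Mpoly F q r (d j) η).natDegree = orderOf ((r : ℕ) : ZMod (2 * q)) ∧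
        ∃ p : Polynomial (⊥ : Subfield F), Irreducible p ∧
          p.map (⊥ : Subfield F).subtype = Mpoly F q r (d j) η) :=
  stmt13_general q g hodd hg2q r hr hrD F η hη i
end
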